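/- arXiv:2102.03043 — 10 statements merged into one kernel-verified Lean document; each statement's English description precedes it below -/
import Mathlib

section
/- Let p : [0,1]^n → [0,1]^n be a regular choice model, i.e., each p_i(x) is non-increasing in x_k for every k ≠ i, and the total sale probability P(x) := Σ_{i=1}^n p_i(x) is non-decreasing in x (coordinatewise). Then for any x ∈ [0,1]^n and any binary vector y ∈ {0,1}^n, one has Σ_i y_i p_i(x) ≤ Σ_i y_i p_i(y). -/
/-!
The coordinatewise minimum `z := x ⊓ y` agrees with `x` on `S = {i | y i = 1}` and
with `y` elsewhere. Moving from `x` down to `z` only lowers the other coordinates of each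
`i ∈ S`, so by regularity the sales on `S` do not drop. Moving from `z` up to `y` raises only
coordinates outside `S`: the sales outside `S` do not rise while the total sales do not drop,
so the sales on `S` do not drop either.
-/

open Finset

section RegularChoice

variable {ι : Type*} {p : (ι → ℝ) → ι → ℝ}

theorem sum_le_sum_of_regular
    (hreg : ∀ x y : ι → ℝ, x ≤ y → ∀ i, x i = y i → p y i ≤ p x i)
    {z w : ι → ℝ} (hzw : z ≤ w) (s : Finset ι) (hs : ∀ i ∈ s, z i = w i) :
    ∑ i ∈ s, p w i ≤ ∑ i ∈ s, p z i :=
  sum_le_sum fun i hi => hreg z w hzw i (hs i hi)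

theorem sum_le_sum_of_regular_of_monotone [Fintype ι] [DecidableEq ι]
    (hreg : ∀ x y : ι → ℝ, x ≤ y → ∀ i, x i = y i → p y i ≤ p x i)
    (hP : Monotone fun x => ∑ i, p x i)
    {z w : ι → ℝ} (hzw : z ≤ w) (s : Finset ι) (hs : ∀ i ∉ s, z i = w i) :
    ∑ i ∈ s, p z i ≤ ∑ i ∈ s, p w i := by
  have hcompl : ∑ i ∈ sᶜ, p w i ≤ ∑ i ∈ sᶜ, p z i :=
    sum_le_sum_of_regular hreg hzw sᶜ fun i hi => hs i (mem_compl.mp hi)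
  have htotal := hP hzw
  simp only [← sum_add_sum_compl s] at htotal
  linarith

end RegularChoice

theorem sum_mul_eq_sum_filter_of_binary {ι : Type*} [Fintype ι] {y : ι → ℝ}
    (hy : ∀ i, y i = 0 ∨ y i = 1) (f : ι → ℝ) :
    ∑ i, y i * f i = ∑ i ∈ univ.filter (y · = 1), f i := by
  rw [sum_filter]
  refine sum_congr rfl fun i _ => ?_
  rcases hy i with h | h <;> simp [h]

theorem refined_regular_sales_bound_general (n : ℕ) (p : (Fin n → ℝ) → Fin n → ℝ)
    (hreg : ∀ x y : Fin n → ℝ, (∀ k, x k ≤ y k) → ∀ i, x i = y i → p y i ≤ p x i)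
    (hP : ∀ x y : Fin n → ℝ, (∀ k, x k ≤ y k) → ∑ i, p x i ≤ ∑ i, p y i)
    (x y : Fin n → ℝ) (hx : ∀ i, x i ∈ Set.Icc (0:ℝ) 1)
    (hy : ∀ i, y i = 0 ∨ y i = 1) :
    ∑ i, y i * p x i ≤ ∑ i, y i * p y i := by
  set S := univ.filter (y · = 1)
  have hx_on_S : ∀ i ∈ S, (x ⊓ y) i = x i := fun i hi =>
    inf_eq_left.mpr ((mem_filter.mp hi).2 ▸ (hx i).2)
  have hy_off_S : ∀ i ∉ S, (x ⊓ y) i = y i := fun i hi =>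
    inf_eq_right.mpr ((hy i).resolve_right (by simpa [S] using hi) ▸ (hx i).1)
  rw [sum_mul_eq_sum_filter_of_binary hy, sum_mul_eq_sum_filter_of_binary hy]
  calc ∑ i ∈ S, p x i ≤ ∑ i ∈ S, p (x ⊓ y) i :=
        sum_le_sum_of_regular hreg inf_le_left S hx_on_S
    _ ≤ ∑ i ∈ S, p y i :=
        sum_le_sum_of_regular_of_monotone hreg hP inf_le_right S hy_off_S

/-- For a regular choice model `p` (each `p i` non-increasing in the
other coordinates, total sale probability non-decreasing), for any `x ∈ [0,1]^n`
and binary `y`, `∑ y i * p x i ≤ ∑ y i * p y i`. -/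
theorem refined_regular_sales_bound (n : ℕ) (p : (Fin n → ℝ) → Fin n → ℝ)
    (hpos : ∀ x i, 0 ≤ p x i)
    (hreg : ∀ x y : Fin n → ℝ, (∀ k, x k ≤ y k) → ∀ i, x i = y i → p y i ≤ p x i)
    (hP : ∀ x y : Fin n → ℝ, (∀ k, x k ≤ y k) → ∑ i, p x i ≤ ∑ i, p y i)
    (x y : Fin n → ℝ) (hx : ∀ i, x i ∈ Set.Icc (0:ℝ) 1)
    (hy : ∀ i, y i = 0 ∨ y i = 1) :
    ∑ i, y i * p x i ≤ ∑ i, y i * p y i :=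
  refined_regular_sales_bound_general n p hreg hP x y hx hy
end

section
/- For n ≥ 2 and α ∈ (0,1], define ω_n := n − (n−1)·α^{1/(n−1)}. Then ω_n is non-decreasing in n, and ω_n → 1 − ln(α) as n → ∞. -/
open Filter Real Topology

/-!
Write `t = n - 1`, so that `ω n = 1 - t (α ^ (1/t) - 1)`. Monotonicity is weighted AM-GM:
`α ^ (1/(t+1))` is the geometric mean of `1` and `α ^ (1/t)` with weights `1/(t+1)` and
`t/(t+1)`. The limit is the derivative of `x ↦ α ^ x` at `0`, read along `x = 1/t → 0⁺`.
-/

namespace Real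

theorem add_one_mul_rpow_one_div_add_one_le {a t : ℝ} (ha : 0 ≤ a) (ht : 0 < t) :
    (t + 1) * a ^ (1 / (t + 1)) ≤ 1 + t * a ^ (1 / t) := by
  have amgm := geom_mean_le_arith_mean2_weighted (w₁ := 1 / (t + 1)) (w₂ := t / (t + 1))
    (p₁ := 1) (p₂ := a ^ (1 / t)) (by positivity) (by positivity) zero_le_one (by positivity)
    (by field_simp; ring)
  have hpow : (a ^ (1 / t)) ^ (t / (t + 1)) = a ^ (1 / (t + 1)) := by
    rw [← rpow_mul ha]
    congr 1
    field_simp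
  rw [one_rpow, one_mul, hpow] at amgm
  calc (t + 1) * a ^ (1 / (t + 1))
      ≤ (t + 1) * (1 / (t + 1) * 1 + t / (t + 1) * a ^ (1 / t)) := by gcongr
    _ = 1 + t * a ^ (1 / t) := by field_simp

theorem tendsto_mul_rpow_one_div_sub_one {a : ℝ} (ha : 0 < a) :
    Tendsto (fun t : ℝ => t * (a ^ (1 / t) - 1)) atTop (𝓝 (log a)) := by
  have slope := (hasStrictDerivAt_const_rpow ha 0).hasDerivAt.tendsto_slope_zero_right
  rw [rpow_zero, one_mul] at slope
  refine (slope.comp tendsto_inv_atTop_nhdsGT_zero).congr fun t => ?_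
  simp [one_div]

end Real

/-- `ω n = n - (n-1) α^{1/(n-1)}` is non-decreasing in `n ≥ 2` and
tends to `1 - ln α` as `n → ∞`, for `α ∈ (0,1]`. -/
theorem omega_monotone_and_limit (α : ℝ) (hα : α ∈ Set.Ioc (0:ℝ) 1) :
    (∀ n : ℕ, 2 ≤ n →
      (n : ℝ) - ((n : ℝ) - 1) * α ^ ((1 : ℝ) / ((n : ℝ) - 1)) ≤
        ((n : ℝ) + 1) - (n : ℝ) * α ^ ((1 : ℝ) / (n : ℝ))) ∧
    Tendsto (fun n : ℕ => (n : ℝ) - ((n : ℝ) - 1) * α ^ ((1 : ℝ) / ((n : ℝ) - 1)))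
      atTop (nhds (1 - Real.log α)) := by
  constructor
  · intro n hn
    have ht : (0 : ℝ) < n - 1 := by
      have : (2 : ℝ) ≤ n := by exact_mod_cast hn
      linarith
    have step := add_one_mul_rpow_one_div_add_one_le hα.1.le ht
    rw [sub_add_cancel] at step
    linarith
  · have shift : Tendsto (fun n : ℕ => (n : ℝ) - 1) atTop atTop :=
      tendsto_atTop_add_const_right _ _ tendsto_natCast_atTop_atTop
    refine ((tendsto_mul_rpow_one_div_sub_one hα.1).comp shift).const_sub 1 |>.congr fun n => ?_
    simp only [Function.comp_apply]
    ring
end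

section
/- Let r_1 ≥ r_2 ≥ ⋯ ≥ r_n > 0 with r_n/r_1 = α, and set r_{n+1} := 0. Then Σ_{i=1}^n (r_i − r_{i+1})/r_i ≤ n − (n−1)·α^{1/(n−1)}, with equality when r_k = r_1·α^{(k−1)/(n−1)}. -/
open Finset

/-! Writing `x_i = r_{i+1}/r_i`, the sum equals `n - (x_1 + ⋯ + x_{n-1})` because the last
summand is `1`, and the product `x_1 ⋯ x_{n-1}` telescopes to `α`. AM-GM bounds the sum of the
`n - 1` ratios below by `(n - 1) α^{1/(n-1)}`, and for the geometric sequence every ratio is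
`α^{1/(n-1)}`. -/

theorem Finset.prod_Ico_div_of_ne_zero {G₀ : Type*} [CommGroupWithZero G₀] {f : ℕ → G₀}
    {m n : ℕ} (hmn : m ≤ n) (hf : ∀ i ∈ Icc m n, f i ≠ 0) :
    ∏ i ∈ Ico m n, f (i + 1) / f i = f n / f m := by
  induction n, hmn using Nat.le_induction with
  | base => simp [div_self (hf m (by simp))]
  | succ n hmn ih =>
    rw [prod_Ico_succ_top hmn, ih fun i hi => hf i (by simp at hi ⊢; omega)]
    have hm : f m ≠ 0 := hf m (by simp; omega)
    have hn : f n ≠ 0 := hf n (by simp; omega)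
    field_simp

theorem Real.card_mul_prod_rpow_inv_card_le_sum {ι : Type*} (s : Finset ι) {z : ι → ℝ}
    (hz : ∀ i ∈ s, 0 ≤ z i) : #s * (∏ i ∈ s, z i) ^ (#s : ℝ)⁻¹ ≤ ∑ i ∈ s, z i := by
  rcases s.eq_empty_or_nonempty with rfl | hs
  · simp
  have hcard : (0 : ℝ) < #s := by exact_mod_cast hs.card_pos
  have amgm := Real.geom_mean_le_arith_mean s 1 z (fun _ _ => zero_le_one) (by simpa using hcard) hz
  simp only [Pi.one_apply, Real.rpow_one, sum_const, nsmul_eq_mul, mul_one, one_mul] at amgm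
  rwa [le_div_iff₀ hcard, mul_comm] at amgm

theorem sum_Icc_sub_div_self_eq {K : Type*} [Field K] {r : ℕ → K} {n : ℕ}
    (hr : ∀ i ∈ Icc 1 n, r i ≠ 0) (hlast : r (n + 1) = 0) :
    ∑ i ∈ Icc 1 n, (r i - r (i + 1)) / r i = n - ∑ i ∈ Ico 1 n, r (i + 1) / r i := by
  have hIco : ∑ i ∈ Ico 1 n, r (i + 1) / r i = ∑ i ∈ Icc 1 n, r (i + 1) / r i :=
    sum_subset Ico_subset_Icc_self fun i hi hi' => by
      obtain rfl : i = n := by simp at hi hi'; omega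
      rw [hlast, zero_div]
  rw [hIco, eq_sub_iff_add_eq, ← sum_add_distrib]
  calc ∑ i ∈ Icc 1 n, ((r i - r (i + 1)) / r i + r (i + 1) / r i)
      = ∑ i ∈ Icc 1 n, (1 : K) :=
        sum_congr rfl fun i hi => by rw [← add_div, sub_add_cancel, div_self (hr i hi)]
    _ = n := by simp

theorem revenue_ratio_sum_bound_general (n : ℕ) (hn : 1 ≤ n) (r : ℕ → ℝ)
    (hpos : ∀ i, 1 ≤ i → i ≤ n → 0 < r i)
    (hlast : r (n + 1) = 0)
    (α : ℝ) (hα : α = r n / r 1) :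
    (∑ i ∈ Icc 1 n, (r i - r (i + 1)) / r i ≤
        (n : ℝ) - ((n : ℝ) - 1) * α ^ ((1 : ℝ) / ((n : ℝ) - 1))) ∧
    ((∀ k, 1 ≤ k → k ≤ n → r k = r 1 * α ^ (((k : ℝ) - 1) / ((n : ℝ) - 1))) →
      ∑ i ∈ Icc 1 n, (r i - r (i + 1)) / r i =
        (n : ℝ) - ((n : ℝ) - 1) * α ^ ((1 : ℝ) / ((n : ℝ) - 1))) := by
  have hr : ∀ i ∈ Icc 1 n, r i ≠ 0 := fun i hi => (hpos i (mem_Icc.1 hi).1 (mem_Icc.1 hi).2).ne'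
  have hcard : (#(Ico 1 n) : ℝ) = n - 1 := by simp [Nat.cast_sub hn]
  rw [sum_Icc_sub_div_self_eq hr hlast]
  constructor
  · have amgm := Real.card_mul_prod_rpow_inv_card_le_sum (Ico 1 n)
      (z := fun i => r (i + 1) / r i) fun i hi => by
        simp only [mem_Ico] at hi
        exact div_nonneg (hpos _ (by omega) hi.2).le (hpos i hi.1 hi.2.le).le
    rw [prod_Ico_div_of_ne_zero hn hr, ← hα, hcard, ← one_div] at amgm
    linarith
  · intro hgeom
    have hαpos : 0 < α := hα ▸ div_pos (hpos n hn le_rfl) (hpos 1 le_rfl hn)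
    have hratio : ∀ i ∈ Ico 1 n, r (i + 1) / r i = α ^ (1 / ((n : ℝ) - 1)) := by
      intro i hi
      simp only [mem_Ico] at hi
      rw [hgeom (i + 1) (by omega) hi.2, hgeom i hi.1 hi.2.le,
        mul_div_mul_left _ _ (hr 1 (by simp [hn])), ← Real.rpow_sub hαpos]
      congr 1
      push_cast
      ring
    rw [sum_congr rfl hratio, sum_const, nsmul_eq_mul, hcard]

/-- For `r_1 ≥ … ≥ r_n > 0` with `r_n/r_1 = α` and `r_{n+1} = 0`,
`∑_{i=1}^n (r_i - r_{i+1})/r_i ≤ n - (n-1) α^{1/(n-1)}`, with equality for the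
geometric sequence `r_k = r_1 α^{(k-1)/(n-1)}`. -/
theorem revenue_ratio_sum_bound (n : ℕ) (hn : 1 ≤ n) (r : ℕ → ℝ)
    (hpos : ∀ i, 1 ≤ i → i ≤ n → 0 < r i)
    (hmono : ∀ i, 1 ≤ i → i < n → r (i + 1) ≤ r i)
    (hlast : r (n + 1) = 0)
    (α : ℝ) (hα : α = r n / r 1) :
    (∑ i ∈ Icc 1 n, (r i - r (i + 1)) / r i ≤
        (n : ℝ) - ((n : ℝ) - 1) * α ^ ((1 : ℝ) / ((n : ℝ) - 1))) ∧
    ((∀ k, 1 ≤ k → k ≤ n → r k = r 1 * α ^ (((k : ℝ) - 1) / ((n : ℝ) - 1))) →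
      ∑ i ∈ Icc 1 n, (r i - r (i + 1)) / r i =
        (n : ℝ) - ((n : ℝ) - 1) * α ^ ((1 : ℝ) / ((n : ℝ) - 1))) :=
  revenue_ratio_sum_bound_general n hn r hpos hlast α hα
end

section
/- Consider m customer segments with weights θ_j ≥ 0 summing to 1, each with a regular choice model p^j on n products, and revenues r_1 ≥ r_2 ≥ ⋯ ≥ r_n > 0 with r_{n+1} := 0 and α := r_n/r_1. Let e^i ∈ {0,1}^n denote the vector with first i coordinates equal to 1, let R(x) := Σ_j θ_j Σ_i r_i p^j_i(x), and let R^o := max_{1≤i≤n} R(e^i) be the best revenue-ordered assortment revenue. Then the personalized refined optimum R̄^p := Σ_j θ_j · max_{x ∈ [0,1]^n} Σ_i r_i p^j_i(x) satisfies R̄^p ≤ ω_n · R^o, where ω_n = n − (n−1)α^{1/(n−1)}. -/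
open Finset

/-!
Abel summation writes a segment's revenue as `∑ l, (r_l - r_{l+1}) P_l(x)` with `r_{n+1} = 0`,
where `P_l` is the choice probability of the `l` highest-revenue products. Regularity makes
`P_l` largest at the revenue-ordered assortment `e^l`: lowering the levels outside the prefix to
`0` only raises the probabilities inside it, and raising the remaining levels to `1` raises the
total purchase probability while lowering the probabilities outside the prefix. After mixing the
segments, `r_l ∑ j, θ_j P^j_l(e^l) ≤ R(e^l) ≤ R^o`, so the refined revenue is at most
`∑ l, (1 - r_{l+1} / r_l) R^o`, and AM-GM on the ratios `r_{l+1} / r_l`, whose product is `α`,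
bounds this sum by `ω_n R^o`.
-/

theorem sum_filter_le_sum_filter_indicator {ι : Type*} [Fintype ι] (q : (ι → ℝ) → ι → ℝ)
    (hreg : ∀ x y : ι → ℝ, (∀ k, x k ≤ y k) → ∀ i, x i = y i → q y i ≤ q x i)
    (hP : ∀ x y : ι → ℝ, (∀ k, x k ≤ y k) → ∑ i, q x i ≤ ∑ i, q y i)
    (P : ι → Prop) [DecidablePred P] (x : ι → ℝ) (hx : ∀ i, x i ∈ Set.Icc (0 : ℝ) 1) :
    ∑ i with P i, q x i ≤ ∑ i with P i, q (fun k => if P k then 1 else 0) i := by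
  set e : ι → ℝ := fun k => if P k then 1 else 0
  set z : ι → ℝ := fun k => if P k then x k else 0
  have hzx : ∀ k, z k ≤ x k := fun k => by
    by_cases hk : P k <;> simp [z, hk, (hx k).1]
  have hze : ∀ k, z k ≤ e k := fun k => by
    by_cases hk : P k <;> simp [z, e, hk, (hx k).2]
  have hx_le_z : ∑ i with P i, q x i ≤ ∑ i with P i, q z i :=
    sum_le_sum fun i hi => hreg z x hzx i (by simp [z, (mem_filter.mp hi).2])
  have he_le_z : ∑ i with ¬P i, q e i ≤ ∑ i with ¬P i, q z i :=
    sum_le_sum fun i hi => hreg z e hze i (by simp [z, e, (mem_filter.mp hi).2])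
  have hz_le_e := hP z e hze
  rw [← sum_filter_add_sum_filter_not univ P (q z),
    ← sum_filter_add_sum_filter_not univ P (q e)] at hz_le_e
  linarith

theorem sum_mul_le_sum_div_mul {α : Type*} {s : Finset α} {d R t : α → ℝ} {M : ℝ}
    (hd : ∀ l ∈ s, 0 ≤ d l) (hR : ∀ l ∈ s, 0 < R l) (ht : ∀ l ∈ s, R l * t l ≤ M) :
    ∑ l ∈ s, d l * t l ≤ (∑ l ∈ s, d l / R l) * M := by
  rw [sum_mul]
  refine sum_le_sum fun l hl => ?_
  calc d l * t l = d l / R l * (R l * t l) := by field_simp [(hR l hl).ne']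
    _ ≤ d l / R l * M := by gcongr; exacts [div_nonneg (hd l hl) (hR l hl).le, ht l hl]

theorem natCast_mul_rpow_div_le_sum_range_div {N : ℕ} {f : ℕ → ℝ} (hf : ∀ k ≤ N, 0 < f k) :
    N * (f N / f 0) ^ (1 / (N : ℝ)) ≤ ∑ k ∈ range N, f (k + 1) / f k := by
  rcases N.eq_zero_or_pos with rfl | hN
  · simp
  have htelescope : ∀ m ≤ N, ∏ k ∈ range m, f (k + 1) / f k = f m / f 0 := by
    intro m hm
    induction m with
    | zero => simp [(hf 0 (Nat.zero_le _)).ne']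
    | succ m ih =>
      rw [prod_range_succ, ih (by omega), div_mul_div_comm, mul_comm (f m),
        mul_div_mul_right _ _ (hf m (by omega)).ne']
  have hamgm := Real.geom_mean_le_arith_mean (range N) (fun _ => 1) (fun k => f (k + 1) / f k)
    (fun _ _ => zero_le_one) (by simpa using hN)
    (fun k hk => (div_pos (hf _ (mem_range.mp hk)) (hf _ (mem_range.mp hk).le)).le)
  simp only [Real.rpow_one, sum_const, card_range, nsmul_eq_mul, mul_one, one_mul] at hamgm
  rw [htelescope N le_rfl, ← one_div, le_div_iff₀' (by exact_mod_cast hN)] at hamgm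
  exact hamgm

theorem sum_range_sub_mul_sum_prefix {n : ℕ} {R : ℕ → ℝ} (hR : R n = 0) (q : Fin n → ℝ) :
    ∑ l ∈ range n, (R l - R (l + 1)) * ∑ i with i.val < l + 1, q i = ∑ i : Fin n, R i * q i := by
  simp_rw [sum_filter, mul_sum]
  rw [sum_comm]
  refine sum_congr rfl fun i _ => ?_
  have hIco : (range n).filter (fun l => (i : ℕ) < l + 1) = Ico (i : ℕ) n := by
    ext l; simp only [mem_filter, mem_range, mem_Ico]; omega
  simp_rw [mul_ite, mul_zero]
  have htelescope := sum_range_sub' (fun k => R (i + k)) (n - i)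
  simp only [← add_assoc, add_zero, Nat.add_sub_cancel' i.isLt.le, hR, sub_zero] at htelescope
  rw [← sum_filter, hIco, ← sum_mul, sum_Ico_eq_sum_range, htelescope]

theorem sum_mul_le_sum_range_sub_mul_sum_prefix_indicator {n : ℕ} (q : (Fin n → ℝ) → Fin n → ℝ)
    (hreg : ∀ x y : Fin n → ℝ, (∀ k, x k ≤ y k) → ∀ i, x i = y i → q y i ≤ q x i)
    (hP : ∀ x y : Fin n → ℝ, (∀ k, x k ≤ y k) → ∑ i, q x i ≤ ∑ i, q y i)
    {R : ℕ → ℝ} (hR : Antitone R) (hRn : R n = 0) (x : Fin n → ℝ)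
    (hx : ∀ i, x i ∈ Set.Icc (0 : ℝ) 1) :
    ∑ i : Fin n, R i * q x i ≤ ∑ l ∈ range n, (R l - R (l + 1)) *
      ∑ i with i.val < l + 1, q (fun k => if (k : ℕ) < l + 1 then 1 else 0) i := by
  rw [← sum_range_sub_mul_sum_prefix hRn]
  exact sum_le_sum fun l _ => mul_le_mul_of_nonneg_left
    (sum_filter_le_sum_filter_indicator q hreg hP _ x hx) (sub_nonneg.mpr (hR l.le_succ))

theorem mul_sum_prefix_le_sum_mul {n : ℕ} {R : ℕ → ℝ} (hR : Antitone R) (hR0 : ∀ l, 0 ≤ R l)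
    {q : Fin n → ℝ} (hq : ∀ i, 0 ≤ q i) (l : ℕ) :
    R l * ∑ i with i.val < l + 1, q i ≤ ∑ i : Fin n, R i * q i :=
  calc R l * ∑ i with i.val < l + 1, q i
      ≤ ∑ i with i.val < l + 1, R i.val * q i := by
        rw [mul_sum]
        exact sum_le_sum fun i hi =>
          mul_le_mul_of_nonneg_right (hR (Nat.lt_succ_iff.mp (mem_filter.mp hi).2)) (hq i)
    _ ≤ ∑ i : Fin n, R i * q i :=
        sum_le_sum_of_subset_of_nonneg (filter_subset _ _) fun i _ _ => mul_nonneg (hR0 _) (hq i)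

theorem mul_sum_weighted_prefix_le {m n : ℕ} {R : ℕ → ℝ} (hR : Antitone R) (hR0 : ∀ l, 0 ≤ R l)
    {θ : Fin m → ℝ} (hθ : ∀ j, 0 ≤ θ j) {q : Fin m → Fin n → ℝ} (hq : ∀ j i, 0 ≤ q j i) (l : ℕ) :
    R l * ∑ j, θ j * ∑ i with i.val < l + 1, q j i ≤ ∑ j, θ j * ∑ i : Fin n, R i * q j i :=
  calc R l * ∑ j, θ j * ∑ i with i.val < l + 1, q j i
      = ∑ j, θ j * (R l * ∑ i with i.val < l + 1, q j i) := by
        rw [mul_sum]; exact sum_congr rfl fun j _ => mul_left_comm _ _ _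
    _ ≤ ∑ j, θ j * ∑ i : Fin n, R i * q j i :=
        sum_le_sum fun j _ =>
          mul_le_mul_of_nonneg_left (mul_sum_prefix_le_sum_mul hR hR0 (hq j) l) (hθ j)

theorem sum_range_sub_div_le {n : ℕ} (hn : 1 ≤ n) {R : ℕ → ℝ} (hpos : ∀ l < n, 0 < R l)
    (hRn : R n = 0) :
    ∑ l ∈ range n, (R l - R (l + 1)) / R l ≤
      n - (n - 1) * (R (n - 1) / R 0) ^ (1 / ((n : ℝ) - 1)) := by
  obtain ⟨N, rfl⟩ : ∃ N, n = N + 1 := ⟨n - 1, by omega⟩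
  have hamgm := natCast_mul_rpow_div_le_sum_range_div (f := R) (N := N) fun k hk =>
    hpos k (Nat.lt_succ_of_le hk)
  have hsplit : ∑ l ∈ range (N + 1), (R l - R (l + 1)) / R l =
      (N + 1) - ∑ k ∈ range N, R (k + 1) / R k := by
    have hterm : ∀ l ∈ range N, (R l - R (l + 1)) / R l = 1 - R (l + 1) / R l := fun l hl => by
      rw [sub_div, div_self (hpos l (Nat.lt_succ_of_lt (mem_range.mp hl))).ne']
    rw [sum_range_succ, hRn, sub_zero, div_self (hpos N (by omega)).ne', sum_congr rfl hterm,
      sum_sub_distrib]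
    simp only [sum_const, card_range, nsmul_eq_mul, mul_one]
    ring
  rw [hsplit]
  push_cast
  simp only [add_sub_cancel_right]
  linarith

/-- The paper's `r_{l+1}` in `0`-based indexing, with the convention `r_{n+1} = 0`. -/
def extendByZero {n : ℕ} (r : Fin n → ℝ) (l : ℕ) : ℝ :=
  if h : l < n then r ⟨l, h⟩ else 0

section extendByZero

variable {n : ℕ} (r : Fin n → ℝ)

theorem extendByZero_of_lt {l : ℕ} (h : l < n) : extendByZero r l = r ⟨l, h⟩ := dif_pos h

@[simp]
theorem extendByZero_val (i : Fin n) : extendByZero r i = r i := dif_pos i.isLt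

@[simp]
theorem extendByZero_self : extendByZero r n = 0 := dif_neg (lt_irrefl n)

variable {r}

theorem extendByZero_nonneg (hr : ∀ i, 0 ≤ r i) (l : ℕ) : 0 ≤ extendByZero r l := by
  unfold extendByZero
  split_ifs
  exacts [hr _, le_rfl]

theorem extendByZero_antitone (hr : ∀ i, 0 ≤ r i) (hanti : ∀ i k : Fin n, i ≤ k → r k ≤ r i) :
    Antitone (extendByZero r) := by
  intro l k hlk
  by_cases hk : k < n
  · rw [extendByZero_of_lt r hk, extendByZero_of_lt r (hlk.trans_lt hk)]
    exact hanti _ _ hlk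
  · rw [extendByZero, dif_neg hk]
    exact extendByZero_nonneg hr l

end extendByZero

/-- For regular segment choice models `p j`, mixture weights `θ`, and
sorted revenues `r`, any personalized refined assortment (one level vector
`x j ∈ [0,1]^n` per segment) earns at most `ω_n` times the best revenue-ordered
assortment revenue, where `ω_n = n - (n-1) α^{1/(n-1)}` and `α = r_n / r_1`. -/
theorem personalized_refined_vs_revenue_ordered (n m : ℕ) (hn : 1 ≤ n)
    (θ : Fin m → ℝ) (hθ : ∀ j, 0 ≤ θ j)
    (p : Fin m → (Fin n → ℝ) → Fin n → ℝ)
    (hpos : ∀ j x i, 0 ≤ p j x i)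
    (hreg : ∀ j (x y : Fin n → ℝ), (∀ k, x k ≤ y k) → ∀ i, x i = y i →
      p j y i ≤ p j x i)
    (hP : ∀ j (x y : Fin n → ℝ), (∀ k, x k ≤ y k) → ∑ i, p j x i ≤ ∑ i, p j y i)
    (r : Fin n → ℝ) (rpos : ∀ i, 0 < r i)
    (rmono : ∀ i k : Fin n, i ≤ k → r k ≤ r i)
    (α : ℝ) (hα : α = r ⟨n - 1, by omega⟩ / r ⟨0, by omega⟩)
    (x : Fin m → Fin n → ℝ) (hx : ∀ j i, x j i ∈ Set.Icc (0:ℝ) 1) :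
    ∑ j, θ j * ∑ i, r i * p j (x j) i ≤
      ((n : ℝ) - ((n : ℝ) - 1) * α ^ ((1 : ℝ) / ((n : ℝ) - 1))) *
        (Icc 1 n).sup' (Finset.nonempty_Icc.mpr hn)
          (fun l => ∑ j, θ j * ∑ i, r i *
            p j (fun k => if (k : ℕ) < l then 1 else 0) i) := by
  set R := extendByZero r
  have hR_anti : Antitone R := extendByZero_antitone (fun i => (rpos i).le) rmono
  have hR_pos : ∀ l < n, 0 < R l := fun l hl => by
    simpa only [R, extendByZero_of_lt r hl] using rpos _
  set e : ℕ → Fin n → ℝ := fun l k => if (k : ℕ) < l then 1 else 0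
  set Ro := (Icc 1 n).sup' (nonempty_Icc.mpr hn) fun l => ∑ j, θ j * ∑ i, r i * p j (e l) i
  have hlevel : ∀ l ∈ range n,
      R l * ∑ j, θ j * ∑ i with i.val < l + 1, p j (e (l + 1)) i ≤ Ro := fun l hl => by
    have hmix := mul_sum_weighted_prefix_le hR_anti (extendByZero_nonneg fun i => (rpos i).le)
      hθ (fun j => hpos j (e (l + 1))) l
    simp only [R, extendByZero_val] at hmix
    exact hmix.trans (le_sup' (fun l => ∑ j, θ j * ∑ i, r i * p j (e l) i)
      (mem_Icc.mpr ⟨l.succ_pos, mem_range.mp hl⟩))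
  have hRo : 0 ≤ Ro := (mul_nonneg (hR_pos 0 hn).le (sum_nonneg fun j _ => mul_nonneg (hθ j)
    (sum_nonneg fun i _ => hpos _ _ _))).trans (hlevel 0 (mem_range.mpr hn))
  calc ∑ j, θ j * ∑ i, r i * p j (x j) i
      ≤ ∑ j, θ j * ∑ l ∈ range n,
          (R l - R (l + 1)) * ∑ i with i.val < l + 1, p j (e (l + 1)) i := by
        refine sum_le_sum fun j _ => mul_le_mul_of_nonneg_left ?_ (hθ j)
        simpa only [R, extendByZero_val] using sum_mul_le_sum_range_sub_mul_sum_prefix_indicator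
          (p j) (hreg j) (hP j) hR_anti (extendByZero_self r) (x j) (hx j)
    _ = ∑ l ∈ range n,
          (R l - R (l + 1)) * ∑ j, θ j * ∑ i with i.val < l + 1, p j (e (l + 1)) i := by
        simp only [mul_sum, mul_left_comm (θ _)]
        exact sum_comm
    _ ≤ (∑ l ∈ range n, (R l - R (l + 1)) / R l) * Ro :=
        sum_mul_le_sum_div_mul (fun l _ => sub_nonneg.mpr (hR_anti l.le_succ))
          (fun l hl => hR_pos l (mem_range.mp hl)) hlevel
    _ ≤ _ := by
        gcongr
        rw [hα, ← extendByZero_of_lt r (by omega : n - 1 < n), ← extendByZero_of_lt r hn]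
        exact sum_range_sub_div_le hn hR_pos (extendByZero_self r)
end

section
/- For the MNL model with attraction values v_0 > 0 and v_i = exp(u_i) > 0, the optimal traditional assortment revenue R*(v) := max_{x ∈ {0,1}^n} Σ_i r_i v_i x_i / (v_0 + Σ_k v_k x_k) is non-decreasing in each v_i (with r_i ≥ 0 fixed). Equivalently, the MNL satisfies the monotone-utility property. -/
/-!
Fix an assortment `s` with revenue `R` under `v`. Revenue at least `R` means
`R * v₀ ≤ ∑ i ∈ s, (r i - R) * v i`. Dropping the products with `r i < R` only removes
negative terms, and on the remaining products the summands `(r i - R) * v i` grow with `v i`.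
So the assortment `{i ∈ s | R ≤ r i}` earns at least `R` under `w ≥ v`.
-/

open Finset

noncomputable section

namespace MNL

variable {ι : Type*} (r : ι → ℝ) (v0 : ℝ)

def revenue (v : ι → ℝ) (s : Finset ι) : ℝ :=
  (∑ i ∈ s, r i * v i) / (v0 + ∑ i ∈ s, v i)

variable {r v0}

lemma le_revenue_iff {v : ι → ℝ} {s : Finset ι} (hden : 0 < v0 + ∑ i ∈ s, v i) {R : ℝ} :
    R ≤ revenue r v0 v s ↔ R * v0 ≤ ∑ i ∈ s, (r i - R) * v i := by
  have hsum : ∑ i ∈ s, (r i - R) * v i = ∑ i ∈ s, r i * v i - R * ∑ i ∈ s, v i := by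
    rw [mul_sum, ← sum_sub_distrib]
    exact sum_congr rfl fun i _ => by ring
  rw [revenue, le_div_iff₀ hden, hsum]
  constructor <;> intro h <;> linarith

lemma sum_sub_mul_le_sum_filter {v : ι → ℝ} (hv : ∀ i, 0 ≤ v i) (s : Finset ι) (R : ℝ) :
    ∑ i ∈ s, (r i - R) * v i ≤ ∑ i ∈ s with R ≤ r i, (r i - R) * v i := by
  rw [← sum_filter_add_sum_filter_not s (fun i => R ≤ r i)]
  refine add_le_of_nonpos_right (sum_nonpos fun i hi => ?_)
  have hri : r i < R := not_le.mp (mem_filter.mp hi).2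
  exact mul_nonpos_of_nonpos_of_nonneg (by linarith) (hv i)

lemma sum_sub_mul_le_of_le {v w : ι → ℝ} (hvw : v ≤ w) {t : Finset ι} {R : ℝ}
    (hR : ∀ i ∈ t, R ≤ r i) :
    ∑ i ∈ t, (r i - R) * v i ≤ ∑ i ∈ t, (r i - R) * w i :=
  sum_le_sum fun i hi => mul_le_mul_of_nonneg_left (hvw i) (sub_nonneg.mpr (hR i hi))

lemma revenue_le_revenue_filter (hv0 : 0 < v0) {v w : ι → ℝ} (hv : ∀ i, 0 ≤ v i) (hvw : v ≤ w)
    (s : Finset ι) :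
    revenue r v0 v s ≤ revenue r v0 w (s.filter fun i => revenue r v0 v s ≤ r i) := by
  have hden : ∀ (u : ι → ℝ), (∀ i, 0 ≤ u i) → ∀ t : Finset ι, 0 < v0 + ∑ i ∈ t, u i :=
    fun u hu t => add_pos_of_pos_of_nonneg hv0 (sum_nonneg fun i _ => hu i)
  have hw : ∀ i, 0 ≤ w i := fun i => (hv i).trans (hvw i)
  set R := revenue r v0 v s
  refine (le_revenue_iff (hden w hw _)).mpr ?_
  calc R * v0 ≤ ∑ i ∈ s, (r i - R) * v i :=
        (le_revenue_iff (hden v hv s)).mp le_rfl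
    _ ≤ ∑ i ∈ s with R ≤ r i, (r i - R) * v i := sum_sub_mul_le_sum_filter hv s R
    _ ≤ ∑ i ∈ s with R ≤ r i, (r i - R) * w i :=
      sum_sub_mul_le_of_le hvw fun i hi => (mem_filter.mp hi).2

end MNL

end

theorem mnl_monotone_utility_general (n : ℕ) (r : Fin n → ℝ)
    (v0 : ℝ) (hv0 : 0 < v0)
    (v w : Fin n → ℝ) (hv : ∀ i, 0 < v i)
    (hvw : ∀ i, v i ≤ w i) :
    (univ : Finset (Fin n → Bool)).sup' univ_nonempty
        (fun x => (∑ i, if x i then r i * v i else 0) /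
          (v0 + ∑ i, if x i then v i else 0)) ≤
      (univ : Finset (Fin n → Bool)).sup' univ_nonempty
        (fun x => (∑ i, if x i then r i * w i else 0) /
          (v0 + ∑ i, if x i then w i else 0)) := by
  simp_rw [← sum_filter]
  refine sup'_le _ _ fun x _ => ?_
  set s := univ.filter fun i => x i = true
  set t := s.filter fun i => MNL.revenue r v0 v s ≤ r i
  calc MNL.revenue r v0 v s ≤ MNL.revenue r v0 w t :=
        MNL.revenue_le_revenue_filter hv0 (fun i => (hv i).le) hvw s
    _ ≤ _ := le_sup'_of_le _ (mem_univ fun i => decide (i ∈ t)) (by simp [MNL.revenue])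

/-- The MNL optimal traditional assortment revenue is non-decreasing
in the attraction values `v_i` (monotone-utility property of the MNL). -/
theorem mnl_monotone_utility (n : ℕ) (r : Fin n → ℝ) (hr : ∀ i, 0 ≤ r i)
    (v0 : ℝ) (hv0 : 0 < v0)
    (v w : Fin n → ℝ) (hv : ∀ i, 0 < v i) (hw : ∀ i, 0 < w i)
    (hvw : ∀ i, v i ≤ w i) :
    (univ : Finset (Fin n → Bool)).sup' univ_nonempty
        (fun x => (∑ i, if x i then r i * v i else 0) /
          (v0 + ∑ i, if x i then v i else 0)) ≤
      (univ : Finset (Fin n → Bool)).sup' univ_nonempty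
        (fun x => (∑ i, if x i then r i * w i else 0) /
          (v0 + ∑ i, if x i then w i else 0)) :=
  mnl_monotone_utility_general n r v0 hv0 v w hv hvw
end

section
/- Let λ_1, …, λ_n ∈ (0,1). Define f(1) := 0 and f(k) := (1 − λ_k)(λ_{k−1} + f(k−1)) for k ≥ 2; define f̂(1) := 0 and f̂(k) := (1 − λ_{k+1})(λ_k + f̂(k−1)) for k ≥ 2. Then for all k ≥ 2: f(k) = f̂(k−1) + λ_1 · Π_{j=2}^k (1 − λ_j). -/
open Finset

theorem f_fhat_relation_general (n : ℕ) (l : ℕ → ℝ)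
    (f fhat : ℕ → ℝ) (hf1 : f 1 = 0) (hfhat1 : fhat 1 = 0)
    (hf : ∀ k, 2 ≤ k → k ≤ n → f k = (1 - l k) * (l (k - 1) + f (k - 1)))
    (hfhat : ∀ k, 2 ≤ k → k ≤ n → fhat k = (1 - l (k + 1)) * (l k + fhat (k - 1))) :
    ∀ k, 2 ≤ k → k ≤ n →
      f k = fhat (k - 1) + l 1 * ∏ j ∈ Icc 2 k, (1 - l j) := by
  intro k hk
  induction k, hk using Nat.le_induction with
  | base =>
    intro h2n
    rw [hf 2 le_rfl h2n, hf1, hfhat1, Icc_self, prod_singleton]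
    ring
  | succ k hk ih =>
    intro hkn
    have hk_le : k ≤ n := by omega
    calc f (k + 1)
        = (1 - l (k + 1)) * (l k + f k) := hf (k + 1) (by omega) hkn
      _ = (1 - l (k + 1)) * (l k + fhat (k - 1)) +
            l 1 * ((∏ j ∈ Icc 2 k, (1 - l j)) * (1 - l (k + 1))) := by
          rw [ih hk_le]; ring
      _ = fhat k + l 1 * ∏ j ∈ Icc 2 (k + 1), (1 - l j) := by
          rw [hfhat k hk hk_le, prod_Icc_succ_top (by omega)]

/-- For `λ_1,…,λ_n ∈ (0,1)` and the recursions
`f(1)=0, f(k)=(1-λ_k)(λ_{k-1}+f(k-1))` and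
`f̂(1)=0, f̂(k)=(1-λ_{k+1})(λ_k+f̂(k-1))`, one has
`f(k) = f̂(k-1) + λ_1 ∏_{j=2}^k (1-λ_j)` for all `2 ≤ k ≤ n`. -/
theorem f_fhat_relation (n : ℕ) (l : ℕ → ℝ)
    (hl : ∀ i, 1 ≤ i → i ≤ n → l i ∈ Set.Ioo (0:ℝ) 1)
    (f fhat : ℕ → ℝ) (hf1 : f 1 = 0) (hfhat1 : fhat 1 = 0)
    (hf : ∀ k, 2 ≤ k → k ≤ n → f k = (1 - l k) * (l (k - 1) + f (k - 1)))
    (hfhat : ∀ k, 2 ≤ k → k ≤ n → fhat k = (1 - l (k + 1)) * (l k + fhat (k - 1))) :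
    ∀ k, 2 ≤ k → k ≤ n →
      f k = fhat (k - 1) + l 1 * ∏ j ∈ Icc 2 k, (1 - l j) :=
  f_fhat_relation_general n l f fhat hf1 hfhat1 hf hfhat
end

section
/- Let 0 ≤ r_1 ≤ r_2 ≤ ⋯ ≤ r_n and λ_1, …, λ_n ∈ (0,1). Define H_0 := 0, H_k := H_{k−1} + λ_k(r_k − H_{k−1}) for k = 1,…,n, and G_0 := 0, G_k := G_{k−1} + λ_{n+1−k}·max(r_{n+1−k} − G_{k−1}, 0) for k = 1,…,n; set G_n as the final value. Then H_n ≤ (2 − λ_n)·G_n; in particular H_n ≤ 2·G_n. -/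
/-!
Run the best order on the first `m` products and the worst order on the other `n - m`. The
invariant `G (n - m) + H m ≤ 2 * G n` holds at `m = 0` because `G` is nonnegative, and passes
from `m` to `m + 1`: the convex-combination step of `H` at product `m + 1` is dominated by the
step `G` takes at that product (if `G` is below `H m`) or by `G` itself (otherwise). Taking
`m = n - 1`, the last step of `H` loses only the factor `2 - λₙ`.
-/

def IsBestOrderRevenue (n : ℕ) (r l H : ℕ → ℝ) : Prop :=
  H 0 = 0 ∧ ∀ m < n, H (m + 1) = H m + l (m + 1) * (r (m + 1) - H m)

/-- The reversed order considers product `n - k` at step `k + 1`. -/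
def IsWorstOrderRevenue (n : ℕ) (r l G : ℕ → ℝ) : Prop :=
  G 0 = 0 ∧ ∀ k < n, G (k + 1) = G k + l (n - k) * max (r (n - k) - G k) 0

lemma add_step_le_max {t x a a' h : ℝ} (ht₀ : 0 ≤ t) (ht₁ : t ≤ 1)
    (ha' : a + t * (x - a) ≤ a') :
    a + (h + t * (x - h)) ≤ max (a' + h) (a + a') := by
  rcases le_total a h with hah | hha
  · exact le_max_of_le_left (by nlinarith)
  · exact le_max_of_le_right (by nlinarith)

lemma step_le_two_sub_mul {t x g₁ g h : ℝ} (ht₀ : 0 ≤ t) (ht₁ : t ≤ 1)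
    (hx : t * x ≤ g₁) (hg₁ : g₁ ≤ g) (hsum : g₁ + h ≤ 2 * g) :
    h + t * (x - h) ≤ (2 - t) * g := by
  nlinarith [mul_le_mul_of_nonneg_left hg₁ ht₀, mul_le_mul_of_nonneg_left hsum (sub_nonneg.2 ht₁)]

section Recursions

variable {n : ℕ} {r l H G : ℕ → ℝ}

lemma IsWorstOrderRevenue.le_succ (hl : ∀ i, 1 ≤ i → i ≤ n → l i ∈ Set.Icc (0 : ℝ) 1)
    (hG : IsWorstOrderRevenue n r l G) {k : ℕ} (hk : k < n) :
    G k + l (n - k) * (r (n - k) - G k) ≤ G (k + 1) ∧ G k ≤ G (k + 1) := by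
  have hl₀ : 0 ≤ l (n - k) := (hl (n - k) (by omega) (by omega)).1
  rw [hG.2 k hk]
  exact ⟨by gcongr; exact le_max_left _ _,
    le_add_of_nonneg_right (mul_nonneg hl₀ (le_max_right _ _))⟩

lemma IsWorstOrderRevenue.le_last (hl : ∀ i, 1 ≤ i → i ≤ n → l i ∈ Set.Icc (0 : ℝ) 1)
    (hG : IsWorstOrderRevenue n r l G) {k : ℕ} (hk : k ≤ n) : G k ≤ G n := by
  induction hk using Nat.decreasingInduction with
  | self => exact le_rfl
  | of_succ k hk ih => exact (hG.le_succ hl hk).2.trans ih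

lemma IsWorstOrderRevenue.nonneg (hl : ∀ i, 1 ≤ i → i ≤ n → l i ∈ Set.Icc (0 : ℝ) 1)
    (hG : IsWorstOrderRevenue n r l G) : 0 ≤ G n :=
  hG.1 ▸ hG.le_last hl (Nat.zero_le n)

lemma worst_add_best_le_two_mul (hl : ∀ i, 1 ≤ i → i ≤ n → l i ∈ Set.Icc (0 : ℝ) 1)
    (hH : IsBestOrderRevenue n r l H) (hG : IsWorstOrderRevenue n r l G) :
    ∀ m ≤ n, G (n - m) + H m ≤ 2 * G n := by
  intro m hm
  induction m with
  | zero => rw [Nat.sub_zero, hH.1]; linarith [hG.nonneg hl]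
  | succ m ih =>
    obtain ⟨hl₀, hl₁⟩ := hl (m + 1) (by omega) hm
    have hstep := (hG.le_succ hl (k := n - (m + 1)) (by omega)).1
    rw [show n - (n - (m + 1)) = m + 1 by omega, show n - (m + 1) + 1 = n - m by omega] at hstep
    calc G (n - (m + 1)) + H (m + 1)
        ≤ max (G (n - m) + H m) (G (n - (m + 1)) + G (n - m)) := by
          rw [hH.2 m (by omega)]; exact add_step_le_max hl₀ hl₁ hstep
      _ ≤ 2 * G n := by
          have := hG.le_last hl (k := n - (m + 1)) (by omega)
          have := hG.le_last hl (k := n - m) (by omega)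
          exact max_le (ih (by omega)) (by linarith)

end Recursions

theorem rcs_factor_two_general (n : ℕ) (r l : ℕ → ℝ)
    (hl : ∀ i, 1 ≤ i → i ≤ n → l i ∈ Set.Ioo (0:ℝ) 1)
    (H G : ℕ → ℝ) (hH0 : H 0 = 0) (hG0 : G 0 = 0)
    (hH : ∀ k, 1 ≤ k → k ≤ n → H k = H (k - 1) + l k * (r k - H (k - 1)))
    (hG : ∀ k, 1 ≤ k → k ≤ n →
      G k = G (k - 1) + l (n + 1 - k) * max (r (n + 1 - k) - G (k - 1)) 0) :
    H n ≤ (2 - l n) * G n ∧ H n ≤ 2 * G n := by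
  have hl' : ∀ i, 1 ≤ i → i ≤ n → l i ∈ Set.Icc (0 : ℝ) 1 :=
    fun i hi hin => Set.Ioo_subset_Icc_self (hl i hi hin)
  have hbest : IsBestOrderRevenue n r l H :=
    ⟨hH0, fun m hm => by simpa using hH (m + 1) (by omega) hm⟩
  have hworst : IsWorstOrderRevenue n r l G :=
    ⟨hG0, fun k hk => by simpa using hG (k + 1) (by omega) hk⟩
  obtain _ | n := n
  · simp [hH0, hG0]
  obtain ⟨hl₀, hl₁⟩ := hl' (n + 1) (by omega) le_rfl
  have hfirst := (hworst.le_succ hl' (k := 0) (by omega)).1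
  rw [hG0, Nat.sub_zero] at hfirst
  have hlast : H (n + 1) ≤ (2 - l (n + 1)) * G (n + 1) := by
    rw [hbest.2 n (by omega)]
    refine step_le_two_sub_mul hl₀ hl₁ (by simpa using hfirst)
      (hworst.le_last hl' (by omega)) ?_
    simpa using worst_add_best_le_two_mul hl' hbest hworst n (by omega)
  exact ⟨hlast, hlast.trans (by nlinarith [hworst.nonneg hl'])⟩

/-- In the RCS model with revenues `0 ≤ r_1 ≤ … ≤ r_n` and attention
probabilities `λ_i ∈ (0,1)`, the best-order optimal revenue `H_n` and worst-order
optimal revenue `G_n` satisfy `H_n ≤ (2 - λ_n) G_n ≤ 2 G_n`. -/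
theorem rcs_factor_two (n : ℕ) (hn : 1 ≤ n) (r l : ℕ → ℝ)
    (hr0 : ∀ i, 1 ≤ i → i ≤ n → 0 ≤ r i)
    (hrmono : ∀ i, 1 ≤ i → i < n → r i ≤ r (i + 1))
    (hl : ∀ i, 1 ≤ i → i ≤ n → l i ∈ Set.Ioo (0:ℝ) 1)
    (H G : ℕ → ℝ) (hH0 : H 0 = 0) (hG0 : G 0 = 0)
    (hH : ∀ k, 1 ≤ k → k ≤ n → H k = H (k - 1) + l k * (r k - H (k - 1)))
    (hG : ∀ k, 1 ≤ k → k ≤ n →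
      G k = G (k - 1) + l (n + 1 - k) * max (r (n + 1 - k) - G (k - 1)) 0) :
    H n ≤ (2 - l n) * G n ∧ H n ≤ 2 * G n :=
  rcs_factor_two_general n r l hl H G hH0 hG0 hH hG
end

section
/- For every ε ∈ (0,1), there exists a random consideration set instance with two products where the ratio of optimal expected revenues between the reversed preference order and the original preference order equals 2 − ε. Concretely: with λ_1 = ε, λ_2 = 1, r_1 = 1/ε, r_2 = 1, under order 1 ≺ 2 the optimal assortment revenue is max(λ_2 r_2 + (1−λ_2)λ_1 r_1, λ_1 r_1) = 1, while under order 2 ≺ 1 it is λ_1 r_1 + (1−λ_1)λ_2 r_2 = 2 − ε. -/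
/-- Tightness of the factor-2 bound for the RCS model. With
`λ_1 = ε, λ_2 = 1, r_1 = 1/ε, r_2 = 1`, the optimal revenue under the order
`1 ≺ 2` is `max (λ_2 r_2 + (1-λ_2) λ_1 r_1) (λ_1 r_1) = 1`, while under the
reversed order `2 ≺ 1` it is `λ_1 r_1 + (1-λ_1) λ_2 r_2 = 2 - ε`; so the ratio
of the two optimal expected revenues equals `2 - ε`. -/
theorem rcs_tight_example (ε : ℝ) (hε : ε ∈ Set.Ioo (0:ℝ) 1)
    (l₁ l₂ r₁ r₂ : ℝ) (hl₁ : l₁ = ε) (hl₂ : l₂ = 1)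
    (hr₁ : r₁ = 1 / ε) (hr₂ : r₂ = 1) :
    max (l₂ * r₂ + (1 - l₂) * l₁ * r₁) (l₁ * r₁) = 1 ∧
    l₁ * r₁ + (1 - l₁) * l₂ * r₂ = 2 - ε ∧
    (l₁ * r₁ + (1 - l₁) * l₂ * r₂) /
        max (l₂ * r₂ + (1 - l₂) * l₁ * r₁) (l₁ * r₁) = 2 - ε := by
  -- Both products earn expected revenue 1 on their own; only ranking product 1 first
  -- lets product 2 still sell when product 1 is not considered.
  have hl₁r₁ : l₁ * r₁ = 1 := by
    rw [hl₁, hr₁]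
    exact mul_one_div_cancel hε.1.ne'
  have horig : max (l₂ * r₂ + (1 - l₂) * l₁ * r₁) (l₁ * r₁) = 1 := by
    rw [hl₂, hr₂, hl₁r₁]
    norm_num
  have hrev : l₁ * r₁ + (1 - l₁) * l₂ * r₂ = 2 - ε := by
    rw [hl₁r₁, hl₁, hl₂, hr₂]
    ring
  exact ⟨horig, hrev, by rw [hrev, horig, div_one]⟩
end

section
/- In the random consideration set model with preference order 1 ≺ 2 ≺ ⋯ ≺ n (product n most preferred), attention probabilities λ_i ∈ (0,1), and revenues r_i ≥ 0, the expected revenue of the full assortment N = {1,…,n} is Σ_{i=1}^n r_i λ_i Π_{j=i+1}^n (1 − λ_j), and this quantity is non-decreasing in each λ_k whenever r_k ≥ Σ_{i=1}^{k−1} r_i λ_i Π_{j=i+1}^{k−1}(1 − λ_j). -/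
open Finset

/-!
Let `R_m` be the expected revenue earned from products `1, …, m` alone. Each new product is
bought exactly when it is considered, so `R_{m+1} = (1 - λ_{m+1}) R_m + λ_{m+1} r_{m+1}`.
Raising `λ_k` leaves `R_{k-1}` unchanged and raises `R_k = R_{k-1} + λ_k (r_k - R_{k-1})`
because `r_k ≥ R_{k-1}`; every later step of the recursion is monotone in `R_m` since
`1 - λ_{m+1} ≥ 0`, so the increase propagates up to `R_n`.
-/

/-- `R_m` in the notation of the paper. -/
def revenueUpTo (r l : ℕ → ℝ) (m : ℕ) : ℝ :=
  ∑ i ∈ Icc 1 m, r i * l i * ∏ j ∈ Icc (i + 1) m, (1 - l j)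

namespace revenueUpTo

variable (r l l' : ℕ → ℝ)

@[simp]
theorem zero : revenueUpTo r l 0 = 0 := by
  simp [revenueUpTo]

theorem succ (m : ℕ) :
    revenueUpTo r l (m + 1) = (1 - l (m + 1)) * revenueUpTo r l m + l (m + 1) * r (m + 1) := by
  have hprod : ∀ i ∈ Icc 1 m, r i * l i * ∏ j ∈ Icc (i + 1) (m + 1), (1 - l j) =
      (1 - l (m + 1)) * (r i * l i * ∏ j ∈ Icc (i + 1) m, (1 - l j)) := by
    intro i hi
    rw [prod_Icc_succ_top (by simp at hi; omega)]
    ring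
  rw [revenueUpTo, sum_Icc_succ_top (by omega), sum_congr rfl hprod, ← mul_sum,
    Icc_eq_empty_of_lt (Nat.lt_succ_self _), prod_empty, revenueUpTo]
  ring

variable {r l l'}

theorem congr_of_eqOn {m : ℕ} (h : ∀ i ∈ Icc 1 m, l i = l' i) :
    revenueUpTo r l m = revenueUpTo r l' m := by
  induction m with
  | zero => simp
  | succ m ih =>
    rw [succ, succ, ih fun i hi => h i (by simp at hi ⊢; omega), h (m + 1) (by simp)]

theorem succ_le_of_attention_le {m : ℕ} (hprev : revenueUpTo r l m = revenueUpTo r l' m)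
    (hle : l (m + 1) ≤ l' (m + 1)) (hr : revenueUpTo r l m ≤ r (m + 1)) :
    revenueUpTo r l (m + 1) ≤ revenueUpTo r l' (m + 1) := by
  rw [succ, succ, ← hprev]
  nlinarith [mul_nonneg (sub_nonneg.2 hle) (sub_nonneg.2 hr)]

theorem le_of_le_of_eqOn_Ioc {k n : ℕ} (hkn : k ≤ n) (hk : revenueUpTo r l k ≤ revenueUpTo r l' k)
    (heq : ∀ j ∈ Ioc k n, l j = l' j) (hle_one : ∀ j ∈ Ioc k n, l' j ≤ 1) :
    revenueUpTo r l n ≤ revenueUpTo r l' n := by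
  induction n, hkn using Nat.le_induction with
  | base => exact hk
  | succ m hkm ih =>
    have hm : m + 1 ∈ Ioc k (m + 1) := by simp; omega
    rw [succ, succ, heq _ hm]
    have := ih (fun j hj => heq j (by simp at hj ⊢; omega))
      (fun j hj => hle_one j (by simp at hj ⊢; omega))
    nlinarith [hle_one _ hm]

end revenueUpTo

theorem rcs_full_assortment_monotone_in_attention_general (n : ℕ) (r : ℕ → ℝ)
    (k : ℕ) (hk1 : 1 ≤ k) (hkn : k ≤ n)
    (l l' : ℕ → ℝ)
    (hl' : ∀ i, 1 ≤ i → i ≤ n → l' i ∈ Set.Ioc (0:ℝ) 1)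
    (hsame : ∀ i, i ≠ k → l i = l' i) (hinc : l k ≤ l' k)
    (hcond : ∑ i ∈ Icc 1 (k - 1), r i * l i * ∏ j ∈ Icc (i + 1) (k - 1), (1 - l j)
      ≤ r k) :
    ∑ i ∈ Icc 1 n, r i * l i * ∏ j ∈ Icc (i + 1) n, (1 - l j) ≤
      ∑ i ∈ Icc 1 n, r i * l' i * ∏ j ∈ Icc (i + 1) n, (1 - l' j) := by
  obtain ⟨m, rfl⟩ := Nat.exists_eq_add_of_le' hk1
  rw [Nat.add_sub_cancel] at hcond
  have hbelow : revenueUpTo r l m = revenueUpTo r l' m :=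
    revenueUpTo.congr_of_eqOn fun i hi => hsame i (by simp at hi; omega)
  have hat : revenueUpTo r l (m + 1) ≤ revenueUpTo r l' (m + 1) :=
    revenueUpTo.succ_le_of_attention_le hbelow hinc hcond
  exact revenueUpTo.le_of_le_of_eqOn_Ioc hkn hat
    (fun j hj => hsame j (by simp at hj; omega))
    (fun j hj => (hl' j (by simp at hj; omega) (mem_Ioc.1 hj).2).2)

/-- In the RCS model with preference order `1 ≺ … ≺ n`, the full
assortment earns `∑_i r_i λ_i ∏_{j>i}(1-λ_j)`, and this quantity is
non-decreasing in each attention probability `λ_k` provided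
`r_k ≥ ∑_{i<k} r_i λ_i ∏_{i<j<k}(1-λ_j)` (the revenue-to-date `R_{k-1}`).
Monotonicity is expressed by increasing the `k`-th attention probability from
`l k` to `l' k` while keeping the others fixed. -/
theorem rcs_full_assortment_monotone_in_attention (n : ℕ) (r : ℕ → ℝ)
    (hr : ∀ i, 1 ≤ i → i ≤ n → 0 ≤ r i)
    (k : ℕ) (hk1 : 1 ≤ k) (hkn : k ≤ n)
    (l l' : ℕ → ℝ)
    (hl : ∀ i, 1 ≤ i → i ≤ n → l i ∈ Set.Ioc (0:ℝ) 1)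
    (hl' : ∀ i, 1 ≤ i → i ≤ n → l' i ∈ Set.Ioc (0:ℝ) 1)
    (hsame : ∀ i, i ≠ k → l i = l' i) (hinc : l k ≤ l' k)
    (hcond : ∑ i ∈ Icc 1 (k - 1), r i * l i * ∏ j ∈ Icc (i + 1) (k - 1), (1 - l j)
      ≤ r k) :
    ∑ i ∈ Icc 1 n, r i * l i * ∏ j ∈ Icc (i + 1) n, (1 - l j) ≤
      ∑ i ∈ Icc 1 n, r i * l' i * ∏ j ∈ Icc (i + 1) n, (1 - l' j) :=
  rcs_full_assortment_monotone_in_attention_general n r k hk1 hkn l l' hl' hsame hinc hcond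
end

section
/- For every m ≥ 1 and ε ∈ (0,1), there exists a latent-class choice instance with m segments and m products where refined assortment optimization earns at least m(1−ε) times the traditional assortment optimum. Concretely: segment j (1 ≤ j ≤ m−1) has weight θ_j = ε^{j−1} − ε^j and segment m has weight ε^{m−1}; product j has revenue r_j = ε^{−(j−1)}; in the traditional setting every segment j buys the lowest-index offered product among {1,…,j} (and buys nothing if no product of index ≤ j is offered), so every nonempty assortment S earns exactly Σ_{j ≥ ℓ(S)} θ_j · r_{ℓ(S)} = 1 where ℓ(S) = min S; in the refined setting segment j buys product j whenever offered, so the full assortment earns Σ_{j=1}^m θ_j r_j = (m−1)(1−ε) + 1 ≥ m(1−ε). -/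
open Finset

namespace LCMNL

variable {ε : ℝ} {θ r : ℕ → ℝ} {m : ℕ}

theorem sum_Ico_weights (hθ : ∀ j, 1 ≤ j → j < m → θ j = ε ^ (j - 1) - ε ^ j)
    {ℓ : ℕ} (hℓ : 1 ≤ ℓ) (hℓm : ℓ ≤ m) :
    ∑ j ∈ Ico ℓ m, θ j = ε ^ (ℓ - 1) - ε ^ (m - 1) := by
  have htelescope : ∀ j ∈ Ico ℓ m, θ j = -ε ^ (j + 1 - 1) - -ε ^ (j - 1) := by
    intro j hj
    obtain ⟨hℓj, hjm⟩ := mem_Ico.mp hj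
    rw [hθ j (hℓ.trans hℓj) hjm, Nat.add_sub_cancel]
    ring
  rw [sum_congr rfl htelescope, sum_Ico_sub (fun j => -ε ^ (j - 1)) hℓm]
  ring

theorem sum_Icc_weights (hθ : ∀ j, 1 ≤ j → j < m → θ j = ε ^ (j - 1) - ε ^ j)
    (hθm : θ m = ε ^ (m - 1)) {ℓ : ℕ} (hℓ : 1 ≤ ℓ) (hℓm : ℓ ≤ m) :
    ∑ j ∈ Icc ℓ m, θ j = ε ^ (ℓ - 1) := by
  rw [← Ico_insert_right hℓm, sum_insert right_notMem_Ico, sum_Ico_weights hθ hℓ hℓm, hθm]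
  ring

theorem weight_mul_revenue (hε : ε ≠ 0) {j : ℕ} (hj : 1 ≤ j) :
    (ε ^ (j - 1) - ε ^ j) * (ε ^ (j - 1))⁻¹ = 1 - ε := by
  obtain ⟨k, rfl⟩ := Nat.exists_eq_add_of_le' hj
  rw [Nat.add_sub_cancel, pow_succ, ← mul_one_sub, mul_comm, ← mul_assoc,
    inv_mul_cancel₀ (pow_ne_zero k hε), one_mul]

theorem sum_Icc_weight_mul_revenue (hε : ε ≠ 0) (hm : 1 ≤ m)
    (hθ : ∀ j, 1 ≤ j → j < m → θ j = ε ^ (j - 1) - ε ^ j) (hθm : θ m = ε ^ (m - 1))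
    (hr : ∀ j, 1 ≤ j → j ≤ m → r j = (ε ^ (j - 1))⁻¹) :
    ∑ j ∈ Icc 1 m, θ j * r j = ((m : ℝ) - 1) * (1 - ε) + 1 := by
  have hsegment : ∀ j ∈ Ico 1 m, θ j * r j = 1 - ε := by
    intro j hj
    obtain ⟨h1j, hjm⟩ := mem_Ico.mp hj
    rw [hθ j h1j hjm, hr j h1j hjm.le, weight_mul_revenue hε h1j]
  have hlast : θ m * r m = 1 := by
    rw [hθm, hr m hm le_rfl, mul_inv_cancel₀ (pow_ne_zero _ hε)]
  rw [← Ico_insert_right hm, sum_insert right_notMem_Ico, hlast, sum_congr rfl hsegment,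
    sum_const, Nat.card_Ico, nsmul_eq_mul, Nat.cast_sub hm, Nat.cast_one]
  ring

end LCMNL

/-- Deterministic core of the tightness construction for the
LC-MNL bound `R̄ ≤ m R*`: with segment weights `θ_j = ε^{j-1} - ε^j`
(`j < m`), `θ_m = ε^{m-1}`, and revenues `r_j = ε^{-(j-1)}`,
(a) the weights sum to 1; (b) every nonempty traditional assortment
`S ⊆ {1,…,m}` earns exactly `∑_{j ≥ min S} θ_j · r_{min S} = 1`;
(c) the refined full assortment earns `∑_j θ_j r_j = (m-1)(1-ε)+1 ≥ m(1-ε)`. -/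
theorem lcmnl_tightness_core (m : ℕ) (hm : 1 ≤ m) (ε : ℝ)
    (hε : ε ∈ Set.Ioo (0:ℝ) 1) (θ r : ℕ → ℝ)
    (hθ : ∀ j, 1 ≤ j → j < m → θ j = ε ^ (j - 1) - ε ^ j)
    (hθm : θ m = ε ^ (m - 1))
    (hr : ∀ j, 1 ≤ j → j ≤ m → r j = (ε ^ (j - 1))⁻¹) :
    (∑ j ∈ Icc 1 m, θ j = 1) ∧
    (∀ S : Finset ℕ, S ⊆ Icc 1 m → ∀ hS : S.Nonempty,
      ∑ j ∈ Icc (S.min' hS) m, θ j * r (S.min' hS) = 1) ∧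
    (∑ j ∈ Icc 1 m, θ j * r j = ((m : ℝ) - 1) * (1 - ε) + 1) ∧
    ((m : ℝ) * (1 - ε) ≤ ∑ j ∈ Icc 1 m, θ j * r j) := by
  have hε0 : ε ≠ 0 := hε.1.ne'
  have hrefined := LCMNL.sum_Icc_weight_mul_revenue hε0 hm hθ hθm hr
  refine ⟨by simpa using LCMNL.sum_Icc_weights hθ hθm le_rfl hm, ?_, hrefined, ?_⟩
  · intro S hS hne
    obtain ⟨h1, hℓm⟩ := mem_Icc.mp (hS (S.min'_mem hne))
    rw [← sum_mul, LCMNL.sum_Icc_weights hθ hθm h1 hℓm, hr _ h1 hℓm,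
      mul_inv_cancel₀ (pow_ne_zero _ hε0)]
  · rw [hrefined]
    linarith [hε.1]
end
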